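/- For a finite set {A₁,…,Aₙ} of compatible observables, every joint observable G of A₁,…,Aₙ is lower bounded in the post-processing order by a minimal joint observable, and upper bounded by a maximal joint observable. (A joint observable M is minimal if every joint observable G' with G' ⪯ M satisfies M ⪯ G'; maximal is defined dually.) -/

import Mathlib

noncomputable section

open scoped BigOperators

variable {H : Type*} [NormedAddCommGroup H] [InnerProductSpace ℂ H] [CompleteSpace H]

/-- A Markov kernel from `Ω₂` to `Ω₁`: nonnegative entries, columns summing to 1. -/
def IsMarkov {Ω₁ Ω₂ : Type*} [Fintype Ω₁] (p : Ω₁ → Ω₂ → ℝ) : Prop :=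
  (∀ x y, 0 ≤ p x y) ∧ ∀ y, ∑ x, p x y = 1

/-- A finite-outcome observable (POVM): positive operators summing to the identity. -/
def IsObservable {Ω : Type*} [Fintype Ω] (A : Ω → H →L[ℂ] H) : Prop :=
  (∀ x, (A x).IsPositive) ∧ ∑ x, A x = 1

/-- Post-processing of `A` by the kernel `p`. -/
def pproc {Ω₁ Ω₂ : Type*} [Fintype Ω₂] (p : Ω₁ → Ω₂ → ℝ) (A : Ω₂ → H →L[ℂ] H) :
    Ω₁ → H →L[ℂ] H := fun x => ∑ y, (p x y : ℂ) • A y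

/-- `A ⪯ B` : `A` is a post-processing of `B`. -/
def PP {Ω₁ Ω₂ : Type*} [Fintype Ω₁] [Fintype Ω₂] (A : Ω₁ → H →L[ℂ] H)
    (B : Ω₂ → H →L[ℂ] H) : Prop := ∃ p, IsMarkov p ∧ A = pproc p B

/-- `G` is a joint observable of the observables `A ℓ`. -/
def IsJoint {n : ℕ} {Ω : Fin n → Type*} [∀ ℓ, Fintype (Ω ℓ)] [∀ ℓ, DecidableEq (Ω ℓ)]
    (A : ∀ ℓ, Ω ℓ → H →L[ℂ] H) (G : (∀ ℓ, Ω ℓ) → H →L[ℂ] H) : Prop :=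
  IsObservable G ∧ ∀ ℓ xℓ, (∑ x : ∀ ℓ, Ω ℓ, if x ℓ = xℓ then G x else 0) = A ℓ xℓ

/-!
Identify an operator `T` with its sesquilinear form `(v, w) ↦ ⟪T v, w⟫`, so that pointwise
convergence of forms is the weak operator topology. By the Riesz representation theorem the
forms of operators of norm at most `1` are exactly the sesquilinear forms bounded by `1`, a closed
subset of a product of discs; hence the forms of the joint observables make up a compact set `K`.
Post-processing is jointly continuous in the Markov kernel and the form, and Markov kernels form a
compact set, so for `g ∈ K` both the post-processings of `g` in `K` and the elements of `K` that
post-process to `g` form closed sets. Along a chain these sets are nested, so they have a common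
point, which bounds the chain; Zorn's lemma gives the minimal and the maximal element.
-/

open scoped InnerProductSpace ComplexConjugate ComplexOrder

theorem IsCompact.exists_maximal_above {X : Type*} [TopologicalSpace X] {J : Set X}
    (hJ : IsCompact J) {r : X → X → Prop} (refl : ∀ x ∈ J, r x x)
    (trans : ∀ {x y z}, r x y → r y z → r x z)
    (closed : ∀ x ∈ J, IsClosed {y ∈ J | r x y}) {g : X} (hg : g ∈ J) :
    ∃ m ∈ J, r g m ∧ ∀ y ∈ J, r m y → r y m := by
  let S := {y // y ∈ J ∧ r g y}
  have chain_bounded : ∀ c : Set S, IsChain (fun a b : S => r a b) c →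
      ∃ ub : S, ∀ a ∈ c, r a ub := by
    intro c hc
    rcases c.eq_empty_or_nonempty with rfl | ⟨a₀, ha₀⟩
    · exact ⟨⟨g, hg, refl g hg⟩, by simp⟩
    have : Nonempty c := ⟨⟨a₀, ha₀⟩⟩
    have directed : Directed (· ⊇ ·) fun a : c => {y ∈ J | r a.1.1 y} := by
      intro a b
      by_cases hab : a = b
      · exact ⟨a, subset_rfl, hab ▸ subset_rfl⟩
      rcases hc a.2 b.2 (Subtype.coe_ne_coe.2 hab) with h | h
      · exact ⟨b, fun y hy => ⟨hy.1, trans h hy.2⟩, subset_rfl⟩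
      · exact ⟨a, subset_rfl, fun y hy => ⟨hy.1, trans h hy.2⟩⟩
    obtain ⟨m, hm⟩ := IsCompact.nonempty_iInter_of_directed_nonempty_isCompact_isClosed _
      directed (fun a => ⟨a.1.1, a.1.2.1, refl _ a.1.2.1⟩)
      (fun a => hJ.of_isClosed_subset (closed _ a.1.2.1) (Set.sep_subset _ _))
      (fun a => closed _ a.1.2.1)
    rw [Set.mem_iInter] at hm
    exact ⟨⟨m, (hm ⟨a₀, ha₀⟩).1, trans a₀.2.2 (hm ⟨a₀, ha₀⟩).2⟩,
      fun a ha => (hm ⟨a, ha⟩).2⟩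
  obtain ⟨m, hm⟩ := exists_maximal_of_chains_bounded chain_bounded trans
  exact ⟨m.1, m.2.1, m.2.2, fun y hy hmy => hm ⟨y, hy, trans m.2.2 hmy⟩ hmy⟩

theorem isMarkov_one {Ω : Type*} [Fintype Ω] [DecidableEq Ω] : IsMarkov (1 : Matrix Ω Ω ℝ) :=
  ⟨fun x y => by rw [Matrix.one_apply]; split_ifs <;> norm_num,
    fun y => by simp [Matrix.one_apply]⟩

theorem IsMarkov.mul {Ω₁ Ω₂ Ω₃ : Type*} [Fintype Ω₁] [Fintype Ω₂] {p : Matrix Ω₁ Ω₂ ℝ}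
    {q : Matrix Ω₂ Ω₃ ℝ} (hp : IsMarkov p) (hq : IsMarkov q) : IsMarkov (p * q) := by
  refine ⟨fun x z => Finset.sum_nonneg fun y _ => mul_nonneg (hp.1 x y) (hq.1 y z), fun z => ?_⟩
  simp_rw [Matrix.mul_apply]
  rw [Finset.sum_comm]
  simp [← Finset.sum_mul, hp.2, hq.2]

theorem isCompact_setOf_isMarkov {Ω₁ Ω₂ : Type*} [Fintype Ω₁] :
    IsCompact {p : Ω₁ → Ω₂ → ℝ | IsMarkov p} := by
  refine (isCompact_univ_pi fun _ => isCompact_univ_pi fun _ =>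
    isCompact_Icc (a := (0 : ℝ)) (b := 1)).of_isClosed_subset ?_ fun p hp => ?_
  · simp only [IsMarkov, Set.ofPred_and, Set.ofPred_forall]
    exact (isClosed_iInter fun _ => isClosed_iInter fun _ =>
      isClosed_le (by fun_prop) (by fun_prop)).inter
        (isClosed_iInter fun _ => isClosed_eq (by fun_prop) (by fun_prop))
  · simp only [Set.mem_univ_pi, Set.mem_Icc]
    exact fun x y => ⟨hp.1 x y,
      hp.2 y ▸ Finset.single_le_sum (fun x' _ => hp.1 x' y) (Finset.mem_univ x)⟩

section PostProcessing

variable {M : Type*} [AddCommMonoid M] [Module ℝ M]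
variable {Ω₁ Ω₂ Ω₃ : Type*}

def realPProc [Fintype Ω₂] (p : Ω₁ → Ω₂ → ℝ) (g : Ω₂ → M) : Ω₁ → M :=
  fun x => ∑ y, p x y • g y

def IsPostProcessing [Fintype Ω₁] [Fintype Ω₂] (f : Ω₁ → M) (g : Ω₂ → M) : Prop :=
  ∃ p, IsMarkov p ∧ f = realPProc p g

theorem realPProc_one [Fintype Ω₁] [DecidableEq Ω₁] (g : Ω₁ → M) :
    realPProc (1 : Matrix Ω₁ Ω₁ ℝ) g = g := by
  funext x
  simp [realPProc, Matrix.one_apply]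

theorem realPProc_realPProc [Fintype Ω₂] [Fintype Ω₃] (p : Matrix Ω₁ Ω₂ ℝ)
    (q : Matrix Ω₂ Ω₃ ℝ) (g : Ω₃ → M) :
    realPProc p (realPProc q g) = realPProc (p * q) g := by
  funext x
  simp only [realPProc, Matrix.mul_apply, Finset.smul_sum, smul_smul, Finset.sum_smul]
  exact Finset.sum_comm

theorem LinearMap.comp_realPProc [Fintype Ω₂] {N : Type*} [AddCommMonoid N] [Module ℝ N]
    (L : M →ₗ[ℝ] N) (p : Ω₁ → Ω₂ → ℝ) (g : Ω₂ → M) :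
    L ∘ realPProc p g = realPProc p (L ∘ g) := by
  funext x
  simp [realPProc]

theorem IsPostProcessing.refl [Fintype Ω₁] [DecidableEq Ω₁] (f : Ω₁ → M) :
    IsPostProcessing f f :=
  ⟨_, isMarkov_one, (realPProc_one f).symm⟩

theorem IsPostProcessing.trans [Fintype Ω₁] [Fintype Ω₂] [Fintype Ω₃] {f : Ω₁ → M}
    {g : Ω₂ → M} {h : Ω₃ → M} (hfg : IsPostProcessing f g) (hgh : IsPostProcessing g h) :
    IsPostProcessing f h := by
  obtain ⟨p, hp, rfl⟩ := hfg
  obtain ⟨q, hq, rfl⟩ := hgh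
  exact ⟨_, hp.mul hq, realPProc_realPProc p q h⟩

theorem isPostProcessing_comp_iff [Fintype Ω₁] [Fintype Ω₂] {N : Type*} [AddCommMonoid N]
    [Module ℝ N] {L : M →ₗ[ℝ] N} (hL : Function.Injective L) {f : Ω₁ → M} {g : Ω₂ → M} :
    IsPostProcessing (L ∘ f) (L ∘ g) ↔ IsPostProcessing f g := by
  simp only [IsPostProcessing, ← L.comp_realPProc, (hL.comp_left).eq_iff]

variable [TopologicalSpace M] [ContinuousAdd M] [ContinuousSMul ℝ M]

theorem continuous_realPProc [Fintype Ω₂] :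
    Continuous fun q : (Ω₁ → Ω₂ → ℝ) × (Ω₂ → M) => realPProc q.1 q.2 := by
  unfold realPProc
  fun_prop

theorem isCompact_setOf_isPostProcessing [Fintype Ω₁] [Fintype Ω₂] (g : Ω₂ → M) :
    IsCompact {f : Ω₁ → M | IsPostProcessing f g} := by
  have : {f : Ω₁ → M | IsPostProcessing f g} = (realPProc · g) '' {p | IsMarkov p} := by
    ext f
    exact ⟨fun ⟨p, hp, hf⟩ => ⟨p, hp, hf.symm⟩, fun ⟨p, hp, hf⟩ => ⟨p, hp, hf.symm⟩⟩
  rw [this]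
  exact isCompact_setOf_isMarkov.image (continuous_realPProc.comp (Continuous.prodMk_left g))

theorem IsCompact.sep_isPostProcessing [Fintype Ω₁] [Fintype Ω₂] [T2Space M] {K : Set (Ω₂ → M)}
    (hK : IsCompact K) (f : Ω₁ → M) : IsCompact {g ∈ K | IsPostProcessing f g} := by
  have : {g ∈ K | IsPostProcessing f g} =
      Prod.snd '' ({p | IsMarkov p} ×ˢ K ∩ {q | f = realPProc q.1 q.2}) := by
    ext g
    exact ⟨fun ⟨hg, p, hp, hf⟩ => ⟨(p, g), ⟨⟨hp, hg⟩, hf⟩, rfl⟩,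
      fun ⟨(p, g), ⟨⟨hp, hg⟩, hf⟩, h⟩ => h ▸ ⟨hg, p, hp, hf⟩⟩
  rw [this]
  exact ((isCompact_setOf_isMarkov.prod hK).inter_right
    (isClosed_eq continuous_const continuous_realPProc)).image continuous_snd

end PostProcessing

section SesquilinearForms

variable {E : Type*} [NormedAddCommGroup E] [InnerProductSpace ℂ E]

def sesqForm : (E →L[ℂ] E) →ₗ[ℝ] (E → E → ℂ) where
  toFun T v w := ⟪T v, w⟫_ℂ
  map_add' _ _ := by ext; simp
  map_smul' _ _ := by ext; simp

@[simp]
theorem sesqForm_apply (T : E →L[ℂ] E) (v w : E) : sesqForm T v w = ⟪T v, w⟫_ℂ := rfl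

theorem sesqForm_injective : Function.Injective (sesqForm : (E →L[ℂ] E) → E → E → ℂ) :=
  fun _ _ h => ContinuousLinearMap.ext fun v => ext_inner_right ℂ fun w => congrFun (congrFun h v) w

theorem ContinuousLinearMap.isPositive_iff_forall_sesqForm_nonneg (T : E →L[ℂ] E) :
    T.IsPositive ↔ ∀ v, 0 ≤ sesqForm T v v := by
  simp [isPositive_iff_complex, Complex.nonneg_iff, Complex.ext_iff, eq_comm, and_comm]

theorem pproc_eq_realPProc {Ω₁ Ω₂ : Type*} [Fintype Ω₂] (p : Ω₁ → Ω₂ → ℝ)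
    (B : Ω₂ → E →L[ℂ] E) : pproc p B = realPProc p B := by
  funext x
  simp [pproc, realPProc, Complex.coe_smul]

theorem pp_iff_isPostProcessing_sesqForm {Ω₁ Ω₂ : Type*} [Fintype Ω₁] [Fintype Ω₂]
    {A : Ω₁ → E →L[ℂ] E} {B : Ω₂ → E →L[ℂ] E} :
    PP A B ↔ IsPostProcessing (sesqForm ∘ A) (sesqForm ∘ B) := by
  rw [isPostProcessing_comp_iff sesqForm_injective]
  simp only [PP, IsPostProcessing, pproc_eq_realPProc]

def IsBoundedSesqForm (r : ℝ) (f : E → E → ℂ) : Prop :=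
  (∀ v v' w, f (v + v') w = f v w + f v' w) ∧ (∀ (c : ℂ) v w, f (c • v) w = conj c * f v w) ∧
    (∀ v w w', f v (w + w') = f v w + f v w') ∧ (∀ (c : ℂ) v w, f v (c • w) = c * f v w) ∧
    ∀ v w, ‖f v w‖ ≤ r * ‖v‖ * ‖w‖

theorem isClosed_setOf_isBoundedSesqForm (r : ℝ) :
    IsClosed {f : E → E → ℂ | IsBoundedSesqForm r f} := by
  simp only [IsBoundedSesqForm, Set.ofPred_and, Set.ofPred_forall]
  refine .inter ?_ (.inter ?_ (.inter ?_ (.inter ?_ ?_))) <;>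
  repeat refine isClosed_iInter fun _ => ?_
  all_goals first
    | exact isClosed_eq (by fun_prop) (by fun_prop)
    | exact isClosed_le (by fun_prop) (by fun_prop)

theorem isBoundedSesqForm_sesqForm {r : ℝ} {T : E →L[ℂ] E} (hT : ‖T‖ ≤ r) :
    IsBoundedSesqForm r (sesqForm T) := by
  refine ⟨fun _ _ _ => by simp, fun _ _ _ => by simp [mul_comm], fun _ _ _ => by simp,
    fun _ _ _ => by simp, fun v w => ?_⟩
  calc ‖⟪T v, w⟫_ℂ‖ ≤ ‖T v‖ * ‖w‖ := norm_inner_le_norm _ _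
    _ ≤ r * ‖v‖ * ‖w‖ := by gcongr; exact T.le_of_opNorm_le hT v

end SesquilinearForms

theorem IsBoundedSesqForm.exists_eq_sesqForm {r : ℝ} {f : H → H → ℂ} (hr : 0 ≤ r)
    (hf : IsBoundedSesqForm r f) : ∃ T : H →L[ℂ] H, ‖T‖ ≤ r ∧ sesqForm T = f := by
  obtain ⟨add_left, smul_left, add_right, smul_right, bound⟩ := hf
  let B : H →L⋆[ℂ] H →L[ℂ] ℂ := LinearMap.mkContinuous₂
    (LinearMap.mk₂'ₛₗ (starRingEnd ℂ) (RingHom.id ℂ) f add_left smul_left add_right smul_right)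
    r bound
  refine ⟨InnerProductSpace.continuousLinearMapOfBilin B,
    ContinuousLinearMap.opNorm_le_bound _ hr fun v => ?_, ?_⟩
  · calc ‖InnerProductSpace.continuousLinearMapOfBilin B v‖ = ‖B v‖ :=
          (InnerProductSpace.toDual ℂ H).symm.norm_map (B v)
      _ ≤ r * ‖v‖ := B.le_of_opNorm_le (LinearMap.mkContinuous₂_norm_le _ hr bound) v
  · funext v w
    exact InnerProductSpace.continuousLinearMapOfBilin_apply B v w

theorem image_sesqForm_closedBall {r : ℝ} (hr : 0 ≤ r) :
    sesqForm '' Metric.closedBall (0 : H →L[ℂ] H) r = {f | IsBoundedSesqForm r f} := by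
  ext f
  constructor
  · rintro ⟨T, hT, rfl⟩
    exact isBoundedSesqForm_sesqForm (mem_closedBall_zero_iff.1 hT)
  · intro hf
    obtain ⟨T, hT, rfl⟩ := hf.exists_eq_sesqForm hr
    exact ⟨T, mem_closedBall_zero_iff.2 hT, rfl⟩

theorem isCompact_image_sesqForm_closedBall (r : ℝ) :
    IsCompact (sesqForm '' Metric.closedBall (0 : H →L[ℂ] H) r) := by
  rcases lt_or_ge r 0 with hr | hr
  · simp [Metric.closedBall_eq_empty.2 hr]
  rw [image_sesqForm_closedBall hr]
  refine (isCompact_univ_pi fun v => isCompact_univ_pi fun w =>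
    isCompact_closedBall (0 : ℂ) (r * ‖v‖ * ‖w‖)).of_isClosed_subset
    (isClosed_setOf_isBoundedSesqForm r) fun f hf => ?_
  simpa using hf.2.2.2.2

theorem IsObservable.norm_le_one {Ω : Type*} [Fintype Ω] {B : Ω → H →L[ℂ] H}
    (hB : IsObservable B) (x : Ω) : ‖B x‖ ≤ 1 := by
  have nonneg y : 0 ≤ B y := (ContinuousLinearMap.nonneg_iff_isPositive _).2 (hB.1 y)
  refine (CStarAlgebra.norm_le_one_iff_of_nonneg _ (nonneg x)).2 ?_
  calc B x ≤ ∑ y, B y := Finset.single_le_sum (fun y _ => nonneg y) (Finset.mem_univ x)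
    _ = 1 := hB.2

section JointObservables

variable {n : ℕ} {Ω : Fin n → Type*} [∀ ℓ, Fintype (Ω ℓ)] [∀ ℓ, DecidableEq (Ω ℓ)]
variable {E : Type*} [NormedAddCommGroup E] [InnerProductSpace ℂ E]

def IsJointForm (A : ∀ ℓ, Ω ℓ → E →L[ℂ] E) (f : (∀ ℓ, Ω ℓ) → E → E → ℂ) : Prop :=
  ((∀ x v, 0 ≤ f x v v) ∧ ∑ x, f x = sesqForm 1) ∧
    ∀ ℓ xℓ, ∑ x with x ℓ = xℓ, f x = sesqForm (A ℓ xℓ)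

theorem isJoint_iff_isJointForm (A : ∀ ℓ, Ω ℓ → E →L[ℂ] E) (G : (∀ ℓ, Ω ℓ) → E →L[ℂ] E) :
    IsJoint A G ↔ IsJointForm A (sesqForm ∘ G) := by
  simp only [IsJoint, IsObservable, IsJointForm,
    ContinuousLinearMap.isPositive_iff_forall_sesqForm_nonneg, ← sesqForm_injective.eq_iff,
    map_sum, apply_ite sesqForm, map_zero, Finset.sum_filter, Function.comp_apply]

theorem isClosed_setOf_isJointForm (A : ∀ ℓ, Ω ℓ → E →L[ℂ] E) :
    IsClosed {f : (∀ ℓ, Ω ℓ) → E → E → ℂ | IsJointForm A f} := by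
  simp only [IsJointForm, Set.ofPred_and, Set.ofPred_forall]
  refine .inter (.inter ?_ ?_) ?_
  · exact isClosed_iInter fun x => isClosed_iInter fun v =>
      isClosed_le continuous_const (by fun_prop)
  · exact isClosed_eq (by fun_prop) continuous_const
  · exact isClosed_iInter fun ℓ => isClosed_iInter fun xℓ =>
      isClosed_eq (by fun_prop) continuous_const

theorem isCompact_image_sesqForm_setOf_isJoint (A : ∀ ℓ, Ω ℓ → H →L[ℂ] H) :
    IsCompact ((sesqForm ∘ ·) '' {G | IsJoint A G}) := by
  have : (sesqForm ∘ ·) '' {G | IsJoint A G} =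
      Set.univ.pi (fun _ => sesqForm '' Metric.closedBall (0 : H →L[ℂ] H) 1) ∩
        {f | IsJointForm A f} := by
    ext f
    constructor
    · rintro ⟨G, hG, rfl⟩
      exact ⟨fun x _ => ⟨G x, mem_closedBall_zero_iff.2 (hG.1.norm_le_one x), rfl⟩,
        (isJoint_iff_isJointForm A G).1 hG⟩
    · rintro ⟨hball, hf⟩
      choose G _ hG using fun x => hball x (Set.mem_univ x)
      obtain rfl : sesqForm ∘ G = f := funext hG
      exact ⟨G, (isJoint_iff_isJointForm A G).2 hf, rfl⟩
  rw [this]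
  exact (isCompact_univ_pi fun _ => isCompact_image_sesqForm_closedBall 1).inter_right
    (isClosed_setOf_isJointForm A)

end JointObservables

/-- Every joint observable is lower bounded by a minimal joint observable and upper
bounded by a maximal joint observable in the post-processing order. -/
theorem joint_bounded_by_minimal_and_maximal {n : ℕ} {Ω : Fin n → Type*}
    [∀ ℓ, Fintype (Ω ℓ)] [∀ ℓ, DecidableEq (Ω ℓ)]
    (A : ∀ ℓ, Ω ℓ → H →L[ℂ] H) (G : (∀ ℓ, Ω ℓ) → H →L[ℂ] H)
    (hG : IsJoint A G) :
    (∃ M : (∀ ℓ, Ω ℓ) → H →L[ℂ] H, IsJoint A M ∧ PP M G ∧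
      ∀ G' : (∀ ℓ, Ω ℓ) → H →L[ℂ] H, IsJoint A G' → PP G' M → PP M G') ∧
    (∃ M : (∀ ℓ, Ω ℓ) → H →L[ℂ] H, IsJoint A M ∧ PP G M ∧
      ∀ G' : (∀ ℓ, Ω ℓ) → H →L[ℂ] H, IsJoint A G' → PP M G' → PP G' M) := by
  have hK := isCompact_image_sesqForm_setOf_isJoint A
  have hGK : sesqForm ∘ G ∈ (sesqForm ∘ ·) '' {G | IsJoint A G} := ⟨G, hG, rfl⟩
  simp only [pp_iff_isPostProcessing_sesqForm]
  constructor
  · obtain ⟨_, ⟨M, hM, rfl⟩, hMG, hmin⟩ := hK.exists_maximal_above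
      (r := fun f g => IsPostProcessing g f) (fun f _ => .refl f) (fun h₁ h₂ => h₂.trans h₁)
      (fun f _ => hK.isClosed.inter (isCompact_setOf_isPostProcessing f).isClosed) hGK
    exact ⟨M, hM, hMG, fun G' hG' => hmin _ ⟨G', hG', rfl⟩⟩
  · obtain ⟨_, ⟨M, hM, rfl⟩, hGM, hmax⟩ := hK.exists_maximal_above
      (fun f _ => .refl f) (fun h₁ h₂ => h₁.trans h₂)
      (fun f _ => (hK.sep_isPostProcessing f).isClosed) hGK
    exact ⟨M, hM, hGM, fun G' hG' => hmax _ ⟨G', hG', rfl⟩⟩
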